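/- For an almost parallelizable 4-web APW₁ (K = 0, a₂ = 0, a ≠ 0,1), the curvatures of the four 3-subwebs are K₁₂₃ = K₁₂₄ = K₁₃₄ = 0 and K₂₃₄ = ((1−2a)a₁² − (a−a²)a₁₁)/(a−a²)³. -/
import Mathlib

/-!
Curvatures of the 3-subwebs [1,2,4], [1,3,4], [2,3,4] of a planar 4-web,
as rational expressions in the curvature `K` of the subweb [1,2,3], the basic
invariant `a`, and its covariant derivatives (formulas (20)–(22) of the paper).
-/

noncomputable def K124 (K a a₁ a₂ a₁₂ : ℝ) : ℝ :=
  (1/a) * (K - a₁₂/a + a₁*a₂/a^2)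

noncomputable def K134 (K a a₁ a₂ a₁₂ a₂₂ : ℝ) : ℝ :=
  (1/(a-1)) * (K + a₂*(a₁-a₂)/(1-a)^2 + (a₁₂ - a₂₂)/(1-a))

noncomputable def K234 (K a a₁ a₂ a₁₁ a₁₂ : ℝ) : ℝ :=
  (1/(a*(a-1))) * (K + (2*a-1)*a₁*(a₁-a₂)/(a^2*(1-a)^2) + (a₁₁ - a₁₂)/(a*(1-a)))

/-- for an almost parallelizable web `APW₁`
(`K = 0`, `a₂ = 0`, hence `a₁₂ = a₂₂ = 0`), the subweb curvatures are
`K₁₂₃ = K₁₂₄ = K₁₃₄ = 0` and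
`K₂₃₄ = ((1−2a)a₁² − (a−a²)a₁₁)/(a−a²)³`. -/
theorem APW1_subweb_curvatures (a a₁ a₁₁ : ℝ) (h0 : a ≠ 0) (h1 : a ≠ 1) :
    K124 0 a a₁ 0 0 = 0 ∧
    K134 0 a a₁ 0 0 0 = 0 ∧
    K234 0 a a₁ 0 a₁₁ 0
      = ((1 - 2*a) * a₁^2 - (a - a^2) * a₁₁) / (a - a^2)^3 := by
  have h1' : a - 1 ≠ 0 := sub_ne_zero.mpr h1
  have h1'' : 1 - a ≠ 0 := sub_ne_zero.mpr (Ne.symm h1)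
  refine ⟨by simp [K124], by simp [K134], ?_⟩
  have h2 : a - a^2 ≠ 0 := by
    have : a * (1 - a) ≠ 0 := mul_ne_zero h0 h1''
    intro h; apply this; linarith [h]
  unfold K234
  field_simp
  ring
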